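/- Let D ≥ 1 and let l : ℝ^D → ℝ be differentiable everywhere with gradient ∇l that is L-Lipschitz: ‖∇l(a) − ∇l(b)‖₂ ≤ L‖a − b‖₂ for all a, b ∈ ℝ^D. Fix δ ∈ ℝ^D, ε ≥ 0, γ > 0, and let z be a random vector in ℝ^D whose coordinates are independent standard normal random variables. Define the random update δ⁺ = δ − ε·sign(∇l(δ) + γz) (sign applied componentwise). Then E[l(δ⁺)] ≤ l(δ) − ε·Σ_{i=1}^{D} |∂_i l(δ)|·(2Φ(|∂_i l(δ)|/γ) − 1) + (L·D·ε²)/2. -/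

import Mathlib

/-!
The descent lemma (the map `t ↦ l (x + t • v) - t ⟪∇l x, v⟫ - L t² ‖v‖² / 2` is antitone on
`[0, ∞)`) bounds `l (δ - ε • s)`, for every `s` with entries in `[-1, 1]`, by
`l δ - ε ⟪∇l δ, s⟫ + L D ε² / 2`, because `‖s‖² ≤ D`. Taking expectations, the `i`-th entry of the
sign vector depends only on `zᵢ`, and `E[sign (a + γ zᵢ)] = P(zᵢ > -a/γ) - P(zᵢ < -a/γ)
= 2Φ(a/γ) - 1`. By `Φ(-x) = 1 - Φ(x)`, the function `a ↦ a (2Φ(a/γ) - 1)` is even.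
-/

open MeasureTheory ProbabilityTheory

noncomputable def Phi (x : ℝ) : ℝ := ((gaussianReal 0 1) (Set.Iic x)).toReal

open scoped RealInnerProductSpace

theorem Real.measurable_sign : Measurable Real.sign :=
  Measurable.ite measurableSet_Iio measurable_const
    (Measurable.ite measurableSet_Ioi measurable_const measurable_const)

theorem Real.abs_sign_le_one (r : ℝ) : |Real.sign r| ≤ 1 := by
  rcases Real.sign_apply_eq r with h | h | h <;> simp [h]

theorem Real.sign_mul_of_pos {c : ℝ} (hc : 0 < c) (r : ℝ) : Real.sign (c * r) = Real.sign r := by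
  rcases lt_trichotomy r 0 with h | rfl | h
  · rw [Real.sign_of_neg h, Real.sign_of_neg (mul_neg_of_pos_of_neg hc h)]
  · rw [mul_zero]
  · rw [Real.sign_of_pos h, Real.sign_of_pos (mul_pos hc h)]

theorem Real.sign_sub_eq_indicator (c t : ℝ) :
    Real.sign (t - c) = (Set.Ioi c).indicator 1 t - (Set.Iio c).indicator 1 t := by
  rcases lt_trichotomy t c with h | rfl | h
  · simp [Real.sign_of_neg (sub_neg.2 h), h, h.not_gt]
  · simp
  · simp [Real.sign_of_pos (sub_pos.2 h), h, h.not_gt]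

theorem integral_sign_sub (μ : Measure ℝ) [IsFiniteMeasure μ] (c : ℝ) :
    ∫ t, Real.sign (t - c) ∂μ = μ.real (Set.Ioi c) - μ.real (Set.Iio c) := by
  simp_rw [Real.sign_sub_eq_indicator c]
  rw [integral_sub ((integrable_const 1).indicator measurableSet_Ioi)
      ((integrable_const 1).indicator measurableSet_Iio),
    integral_indicator_one measurableSet_Ioi, integral_indicator_one measurableSet_Iio]

theorem gaussianReal_real_Iio (c : ℝ) : (gaussianReal 0 1).real (Set.Iio c) = Phi c := by
  have := nullSingletonClass_gaussianReal (μ := 0) one_ne_zero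
  rw [Phi, measureReal_def, measure_congr Iio_ae_eq_Iic]

theorem gaussianReal_real_Ioi (c : ℝ) : (gaussianReal 0 1).real (Set.Ioi c) = 1 - Phi c := by
  rw [← Set.compl_Iic, probReal_compl_eq_one_sub measurableSet_Iic, Phi, measureReal_def]

theorem Phi_neg (x : ℝ) : Phi (-x) = 1 - Phi x := by
  have := nullSingletonClass_gaussianReal (μ := 0) one_ne_zero
  have hsymm : (gaussianReal 0 1).map (fun t => -t) = gaussianReal 0 1 := by
    simpa using gaussianReal_map_neg (μ := 0) (v := 1)
  rw [← gaussianReal_real_Ioi, measureReal_congr Ioi_ae_eq_Ici, Phi, ← measureReal_def,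
    ← hsymm, map_measureReal_apply (by fun_prop) measurableSet_Iic, hsymm]
  congr 1
  ext t
  simp

theorem mul_two_mul_Phi_sub_one_eq_abs (a γ : ℝ) :
    a * (2 * Phi (a / γ) - 1) = |a| * (2 * Phi (|a| / γ) - 1) := by
  rcases le_or_gt 0 a with h | h
  · rw [abs_of_nonneg h]
  · rw [abs_of_neg h, neg_div, Phi_neg]
    ring

theorem integral_sign_add_mul_gaussianReal (a : ℝ) {γ : ℝ} (hγ : 0 < γ) :
    ∫ t, Real.sign (a + γ * t) ∂gaussianReal 0 1 = 2 * Phi (a / γ) - 1 := by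
  have hrescale : ∀ t, Real.sign (a + γ * t) = Real.sign (t - -(a / γ)) := fun t => by
    rw [← Real.sign_mul_of_pos hγ (t - _)]
    congr 1
    field_simp
    ring
  simp_rw [hrescale]
  rw [integral_sign_sub, gaussianReal_real_Ioi, gaussianReal_real_Iio, Phi_neg]
  ring

theorem integrable_sign_add_mul_eval {ι : Type*} [Fintype ι] (μ : ι → Measure ℝ)
    [∀ i, IsFiniteMeasure (μ i)] (a γ : ℝ) (i : ι) :
    Integrable (fun z : ι → ℝ => Real.sign (a + γ * z i)) (Measure.pi μ) :=
  Integrable.of_bound (Real.measurable_sign.comp (by fun_prop)).aestronglyMeasurable 1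
    (ae_of_all _ fun _ => Real.abs_sign_le_one _)

theorem integral_sum_mul_sign_add_mul_pi_gaussianReal {ι : Type*} [Fintype ι] (g : ι → ℝ) {γ : ℝ}
    (hγ : 0 < γ) :
    ∫ z, ∑ i, g i * Real.sign (g i + γ * z i) ∂(Measure.pi fun _ : ι => gaussianReal 0 1) =
      ∑ i, |g i| * (2 * Phi (|g i| / γ) - 1) := by
  rw [integral_finsetSum _ fun i _ => (integrable_sign_add_mul_eval _ _ _ i).const_mul (g i)]
  refine Finset.sum_congr rfl fun i _ => ?_
  rw [integral_const_mul, integral_comp_eval (X := fun _ => ℝ) (i := i)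
      (f := fun t => Real.sign (g i + γ * t))
      (Real.measurable_sign.comp (by fun_prop)).aestronglyMeasurable,
    integral_sign_add_mul_gaussianReal _ hγ, mul_two_mul_Phi_sub_one_eq_abs]

section Descent

variable {E : Type*} [NormedAddCommGroup E] [InnerProductSpace ℝ E] [CompleteSpace E]
  {f : E → ℝ} {L : ℝ}

theorem hasDerivAt_comp_add_smul (hf : Differentiable ℝ f) (x v : E) (t : ℝ) :
    HasDerivAt (fun s : ℝ => f (x + s • v)) ⟪gradient f (x + t • v), v⟫ t := by
  have hline : HasDerivAt (fun s : ℝ => x + s • v) v t := by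
    simpa using ((hasDerivAt_id t).smul_const v).const_add x
  rw [inner_gradient_left]
  exact (hf _).hasFDerivAt.comp_hasDerivAt t hline

theorem apply_add_le_of_lipschitz_gradient (hf : Differentiable ℝ f)
    (hL : ∀ a b, ‖gradient f a - gradient f b‖ ≤ L * ‖a - b‖) (x v : E) :
    f (x + v) ≤ f x + ⟪gradient f x, v⟫ + L / 2 * ‖v‖ ^ 2 := by
  set φ : ℝ → ℝ := fun t => f (x + t • v) - t * ⟪gradient f x, v⟫ - L / 2 * t ^ 2 * ‖v‖ ^ 2
  have hφ : ∀ t, HasDerivAt φ (⟪gradient f (x + t • v), v⟫ - ⟪gradient f x, v⟫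
      - L * t * ‖v‖ ^ 2) t := fun t =>
    (((hasDerivAt_comp_add_smul hf x v t).sub ((hasDerivAt_id' t).mul_const _)).sub
      (((hasDerivAt_pow 2 t).const_mul (L / 2)).mul_const (‖v‖ ^ 2))).congr_deriv (by ring)
  have hφ_nonpos : ∀ t ∈ interior (Set.Ici (0 : ℝ)), ⟪gradient f (x + t • v), v⟫
      - ⟪gradient f x, v⟫ - L * t * ‖v‖ ^ 2 ≤ 0 := by
    intro t ht
    rw [interior_Ici, Set.mem_Ioi] at ht
    have := calc ⟪gradient f (x + t • v), v⟫ - ⟪gradient f x, v⟫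
        = ⟪gradient f (x + t • v) - gradient f x, v⟫ := (inner_sub_left ..).symm
      _ ≤ ‖gradient f (x + t • v) - gradient f x‖ * ‖v‖ := real_inner_le_norm _ _
      _ ≤ L * ‖x + t • v - x‖ * ‖v‖ := by gcongr; exact hL _ _
      _ = L * t * ‖v‖ ^ 2 := by
        rw [add_sub_cancel_left, norm_smul, Real.norm_of_nonneg ht.le]; ring
    linarith
  have hanti := antitoneOn_of_hasDerivWithinAt_nonpos (convex_Ici 0)
    (fun t _ => (hφ t).continuousAt.continuousWithinAt)
    (fun t _ => (hφ t).hasDerivWithinAt) hφ_nonpos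
  have := hanti (Set.self_mem_Ici) (show (1 : ℝ) ∈ Set.Ici 0 by norm_num) zero_le_one
  simp only [φ, zero_smul, one_smul, add_zero] at this
  linarith

end Descent

theorem EuclideanSpace.norm_le_sqrt_card_of_abs_le_one {ι : Type*} [Fintype ι]
    {v : EuclideanSpace ℝ ι} (hv : ∀ i, |v i| ≤ 1) : ‖v‖ ≤ √(Fintype.card ι) := by
  rw [EuclideanSpace.norm_eq]
  gcongr
  calc ∑ i, ‖v i‖ ^ 2 ≤ ∑ _ : ι, (1 : ℝ) :=
        Finset.sum_le_sum fun i _ => pow_le_one₀ (norm_nonneg _) (hv i)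
    _ = Fintype.card ι := by simp

theorem integrable_apply_sub_smul_of_abs_le_one {α ι : Type*} [MeasurableSpace α] [Fintype ι]
    {μ : Measure α} [IsFiniteMeasure μ] {f : EuclideanSpace ℝ ι → ℝ} (hf : Continuous f)
    (x : EuclideanSpace ℝ ι) (ε : ℝ) {s : α → EuclideanSpace ℝ ι} (hs : Measurable s)
    (hs_le : ∀ a i, |s a i| ≤ 1) : Integrable (fun a => f (x - ε • s a)) μ := by
  obtain ⟨C, hC⟩ := IsCompact.exists_bound_of_continuousOn (f := fun v => f (x - ε • v))
    (isCompact_closedBall (0 : EuclideanSpace ℝ ι) √(Fintype.card ι))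
    (hf.comp (by fun_prop)).continuousOn
  refine Integrable.of_bound (hf.measurable.comp (by fun_prop)).aestronglyMeasurable
    C (ae_of_all _ fun a => hC _ (mem_closedBall_zero_iff.2 ?_))
  exact EuclideanSpace.norm_le_sqrt_card_of_abs_le_one (hs_le a)

theorem nonneg_of_norm_sub_le_mul_norm_sub {E F : Type*} [NormedAddCommGroup E] [Nontrivial E]
    [SeminormedAddCommGroup F] {g : E → F} {L : ℝ} (h : ∀ a b, ‖g a - g b‖ ≤ L * ‖a - b‖) :
    0 ≤ L := by
  obtain ⟨a, ha⟩ := exists_ne (0 : E)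
  have := (norm_nonneg _).trans (h a 0)
  rw [sub_zero] at this
  exact nonneg_of_mul_nonneg_left this (norm_pos_iff.2 ha)

theorem apply_sub_smul_le_of_abs_le_one {ι : Type*} [Fintype ι] {f : EuclideanSpace ℝ ι → ℝ}
    {L : ℝ} (hf : Differentiable ℝ f) (hL : ∀ a b, ‖gradient f a - gradient f b‖ ≤ L * ‖a - b‖)
    (hL0 : 0 ≤ L) (x v : EuclideanSpace ℝ ι) (hv : ∀ i, |v i| ≤ 1) (ε : ℝ) :
    f (x - ε • v) ≤ f x - ε * ⟪gradient f x, v⟫ + L * Fintype.card ι * ε ^ 2 / 2 := by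
  have hnorm : ‖ε • v‖ ^ 2 ≤ Fintype.card ι * ε ^ 2 := by
    rw [norm_smul, mul_pow, Real.norm_eq_abs, sq_abs, mul_comm]
    gcongr
    calc ‖v‖ ^ 2 ≤ √(Fintype.card ι : ℝ) ^ 2 := by
          gcongr; exact EuclideanSpace.norm_le_sqrt_card_of_abs_le_one hv
      _ = (Fintype.card ι : ℝ) := Real.sq_sqrt (Nat.cast_nonneg _)
  have := apply_add_le_of_lipschitz_gradient hf hL x (-(ε • v))
  rw [← sub_eq_add_neg, inner_neg_right, real_inner_smul_right, norm_neg] at this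
  nlinarith [mul_le_mul_of_nonneg_left hnorm hL0]

theorem stmt7_general (D : ℕ) (hD : 1 ≤ D)
    (l : EuclideanSpace ℝ (Fin D) → ℝ) (hl : Differentiable ℝ l)
    (L : ℝ) (hL : ∀ a b, ‖gradient l a - gradient l b‖ ≤ L * ‖a - b‖)
    (δ : EuclideanSpace ℝ (Fin D)) (ε γ : ℝ) (hγ : 0 < γ) :
    (∫ z : Fin D → ℝ,
        l (δ - ε • (WithLp.equiv 2 (Fin D → ℝ)).symm
          (fun i => Real.sign (gradient l δ i + γ * z i)))
      ∂(Measure.pi fun _ => gaussianReal 0 1)) ≤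
      l δ - ε * (∑ i, |gradient l δ i| * (2 * Phi (|gradient l δ i| / γ) - 1))
        + L * D * ε ^ 2 / 2 := by
  set g := gradient l δ
  set μ : Measure (Fin D → ℝ) := Measure.pi fun _ => gaussianReal 0 1
  set s : (Fin D → ℝ) → EuclideanSpace ℝ (Fin D) := fun z =>
    (WithLp.equiv 2 (Fin D → ℝ)).symm (fun i => Real.sign (g i + γ * z i))
  have hs : ∀ z i, |s z i| ≤ 1 := fun z i => Real.abs_sign_le_one _
  have hL0 : 0 ≤ L := by
    have : Nonempty (Fin D) := ⟨⟨0, hD⟩⟩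
    exact nonneg_of_norm_sub_le_mul_norm_sub hL
  have hstep : ∀ z, l (δ - ε • s z) ≤
      l δ - ε * ∑ i, g i * Real.sign (g i + γ * z i) + L * D * ε ^ 2 / 2 := fun z => by
    have hinner : ⟪g, s z⟫ = ∑ i, g i * Real.sign (g i + γ * z i) := by
      simp [s, PiLp.inner_apply, mul_comm]
    have := apply_sub_smul_le_of_abs_le_one hl hL hL0 δ (s z) (hs z) ε
    rwa [hinner, Fintype.card_fin] at this
  have hint : Integrable (fun z => l (δ - ε • s z)) μ :=
    integrable_apply_sub_smul_of_abs_le_one hl.continuous δ ε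
      ((WithLp.measurable_toLp 2 _).comp
        (measurable_pi_lambda _ fun i => Real.measurable_sign.comp (by fun_prop))) hs
  have hsum : Integrable (fun z => ∑ i, g i * Real.sign (g i + γ * z i)) μ :=
    integrable_finsetSum _ fun i _ => (integrable_sign_add_mul_eval _ _ _ i).const_mul (g i)
  calc ∫ z, l (δ - ε • s z) ∂μ
      ≤ ∫ z, (l δ - ε * ∑ i, g i * Real.sign (g i + γ * z i) + L * D * ε ^ 2 / 2) ∂μ :=
        integral_mono hint
          (((integrable_const _).sub (hsum.const_mul ε)).add (integrable_const _)) hstep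
    _ = _ := by
      rw [integral_add ((integrable_const _).sub' (hsum.const_mul ε)) (integrable_const _),
        integral_sub (integrable_const _) (hsum.const_mul ε), integral_const_mul,
        integral_sum_mul_sign_add_mul_pi_gaussianReal _ hγ]
      simp

/-- expected one-step progress: if `l` is differentiable with `L`-Lipschitz
gradient, `ε ≥ 0`, `γ > 0`, and `z` has i.i.d. standard normal coordinates, then for the
random update `δ⁺ = δ − ε·sign(∇l(δ) + γz)`,
`E[l(δ⁺)] ≤ l(δ) − ε Σᵢ |∂ᵢl(δ)| (2Φ(|∂ᵢl(δ)|/γ) − 1) + L D ε² / 2`. -/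
theorem stmt7 (D : ℕ) (hD : 1 ≤ D)
    (l : EuclideanSpace ℝ (Fin D) → ℝ) (hl : Differentiable ℝ l)
    (L : ℝ) (hL : ∀ a b, ‖gradient l a - gradient l b‖ ≤ L * ‖a - b‖)
    (δ : EuclideanSpace ℝ (Fin D)) (ε γ : ℝ) (hε : 0 ≤ ε) (hγ : 0 < γ) :
    (∫ z : Fin D → ℝ,
        l (δ - ε • (WithLp.equiv 2 (Fin D → ℝ)).symm
          (fun i => Real.sign (gradient l δ i + γ * z i)))
      ∂(Measure.pi fun _ => gaussianReal 0 1)) ≤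
      l δ - ε * (∑ i, |gradient l δ i| * (2 * Phi (|gradient l δ i| / γ) - 1))
        + L * D * ε ^ 2 / 2 :=
  stmt7_general D hD l hl L hL δ ε γ hγ
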